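/- In the 4-strand braid group B₄, the identity (σ₃·σ₁⁻¹)·(σ₁·σ₁·σ₂·σ₁·σ₁·σ₃⁻¹·σ₂·σ₁⁻¹·σ₂·σ₃·σ₃)·(σ₃·σ₁⁻¹)⁻¹ = σ₁·(σ₃·σ₂·σ₃⁻¹)·σ₁·σ₁·σ₂·(σ₂·σ₁·σ₂⁻¹)·σ₃ holds. Consequently, the 4-braid σ₁²σ₂σ₁²σ₃⁻¹σ₂σ₁⁻¹σ₂σ₃² (a braid representative of the knot 9₄₉) is conjugate to the product of band generators a₂₁·a₄₂·a₂₁·a₂₁·a₃₂·a₃₁·a₄₃, i.e., it is conjugate to a strongly quasipositive braid. -/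

import Mathlib

namespace Braid4

/-- Relations of the Artin presentation of the 4-braid group, on generators
`0 ↦ σ₁`, `1 ↦ σ₂`, `2 ↦ σ₃`. -/
def artinRels4 : Set (FreeGroup (Fin 3)) :=
  { FreeGroup.of 0 * FreeGroup.of 2 * (FreeGroup.of 2 * FreeGroup.of 0)⁻¹,
    FreeGroup.of 0 * FreeGroup.of 1 * FreeGroup.of 0 *
      (FreeGroup.of 1 * FreeGroup.of 0 * FreeGroup.of 1)⁻¹,
    FreeGroup.of 1 * FreeGroup.of 2 * FreeGroup.of 1 *
      (FreeGroup.of 2 * FreeGroup.of 1 * FreeGroup.of 2)⁻¹ }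

/-- The 4-strand braid group with the Artin presentation. -/
abbrev B4 := PresentedGroup artinRels4

def σ₁ : B4 := PresentedGroup.of 0
def σ₂ : B4 := PresentedGroup.of 1
def σ₃ : B4 := PresentedGroup.of 2

/-- Band generators of `B₄`: `a_{ij} = σ_{i-1} ⋯ σ_{j+1} σ_j σ_{j+1}⁻¹ ⋯ σ_{i-1}⁻¹`. -/
def a21 : B4 := σ₁
def a32 : B4 := σ₂
def a43 : B4 := σ₃
def a31 : B4 := σ₂ * σ₁ * σ₂⁻¹
def a42 : B4 := σ₃ * σ₂ * σ₃⁻¹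
def a41 : B4 := σ₃ * σ₂ * σ₁ * σ₂⁻¹ * σ₃⁻¹

/-- The set of band generators of `B₄`. -/
def bandGens : Set B4 := {a21, a31, a41, a32, a42, a43}

/-!
Only two consequences of the Artin relations are needed: `σ₁` commutes with `σ₃`, and the band
generator `a₃₁ = σ₂ σ₁ σ₂⁻¹` also equals `σ₁⁻¹ σ₂ σ₁`. After the latter substitution, the conjugate
of the `9₄₉` braid by `σ₃ σ₁⁻¹` and the band word differ only by moving `σ₃^{±1}` past powers of `σ₁`.
-/

theorem commute_σ₁_σ₃ : Commute σ₁ σ₃ :=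
  PresentedGroup.mk_eq_mk_of_mul_inv_mem (Or.inl rfl)

theorem σ₁_mul_σ₂_mul_σ₁ : σ₁ * σ₂ * σ₁ = σ₂ * σ₁ * σ₂ :=
  PresentedGroup.mk_eq_mk_of_mul_inv_mem (Or.inr (Or.inl rfl))

theorem a31_eq_σ₁_inv_mul_σ₂_mul_σ₁ : a31 = σ₁⁻¹ * σ₂ * σ₁ :=
  calc a31 = σ₁⁻¹ * (σ₁ * σ₂ * σ₁) * σ₂⁻¹ := by rw [a31]; group
    _ = σ₁⁻¹ * σ₂ * σ₁ := by rw [σ₁_mul_σ₂_mul_σ₁]; group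

theorem conj_949_eq_sqp :
    (σ₃ * σ₁⁻¹) *
        (σ₁ * σ₁ * σ₂ * σ₁ * σ₁ * σ₃⁻¹ * σ₂ * σ₁⁻¹ * σ₂ * σ₃ * σ₃) *
        (σ₃ * σ₁⁻¹)⁻¹
      = a21 * a42 * a21 * a21 * a32 * a31 * a43 := by
  have h₁₃ := commute_σ₁_σ₃
  rw [a31_eq_σ₁_inv_mul_σ₂_mul_σ₁, a21, a42, a32, a43]
  calc (σ₃ * σ₁⁻¹) *
        (σ₁ * σ₁ * σ₂ * σ₁ * σ₁ * σ₃⁻¹ * σ₂ * σ₁⁻¹ * σ₂ * σ₃ * σ₃) *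
        (σ₃ * σ₁⁻¹)⁻¹
      = σ₃ * σ₁ * σ₂ * (σ₁ * σ₁ * σ₃⁻¹) * σ₂ * σ₁⁻¹ * σ₂ * (σ₃ * (σ₃ * σ₁ * σ₃⁻¹)) := by group
    _ = σ₃ * σ₁ * σ₂ * (σ₁ * σ₁ * σ₃⁻¹) * σ₂ * σ₁⁻¹ * σ₂ * (σ₃ * σ₁) := by
      rw [h₁₃.symm.mul_inv_cancel]
    _ = σ₁ * σ₃ * σ₂ * (σ₃⁻¹ * (σ₁ * σ₁)) * σ₂ * σ₁⁻¹ * σ₂ * (σ₁ * σ₃) := by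
      rw [← h₁₃.eq, (h₁₃.mul_left h₁₃).inv_right.eq]
    _ = _ := by group

theorem sqp_mem_closure_bandGens :
    a21 * a42 * a21 * a21 * a32 * a31 * a43 ∈ Submonoid.closure bandGens := by
  refine mul_mem (mul_mem (mul_mem (mul_mem (mul_mem (mul_mem ?_ ?_) ?_) ?_) ?_) ?_) ?_ <;>
    exact Submonoid.subset_closure (by simp [bandGens])

/-- The conjugation computation showing that the braid representative
`σ₁² σ₂ σ₁² σ₃⁻¹ σ₂ σ₁⁻¹ σ₂ σ₃²` of the knot `9₄₉` is conjugate to the strongly quasipositive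
braid `a₂₁ a₄₂ a₂₁ a₂₁ a₃₂ a₃₁ a₄₃`. -/
theorem braid_949_sqp :
    (σ₃ * σ₁⁻¹) *
        (σ₁ * σ₁ * σ₂ * σ₁ * σ₁ * σ₃⁻¹ * σ₂ * σ₁⁻¹ * σ₂ * σ₃ * σ₃) *
        (σ₃ * σ₁⁻¹)⁻¹
      = σ₁ * (σ₃ * σ₂ * σ₃⁻¹) * σ₁ * σ₁ * σ₂ * (σ₂ * σ₁ * σ₂⁻¹) * σ₃ ∧
    IsConj (σ₁ * σ₁ * σ₂ * σ₁ * σ₁ * σ₃⁻¹ * σ₂ * σ₁⁻¹ * σ₂ * σ₃ * σ₃)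
      (a21 * a42 * a21 * a21 * a32 * a31 * a43) ∧
    a21 * a42 * a21 * a21 * a32 * a31 * a43 ∈ Submonoid.closure bandGens :=
  ⟨conj_949_eq_sqp, isConj_iff.mpr ⟨_, conj_949_eq_sqp⟩, sqp_mem_closure_bandGens⟩
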